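/- arXiv:1405.1702 — 4 statements merged into one kernel-verified Lean document; each statement's English description precedes it below -/
import Mathlib

section
/- Let S be a nonempty set of vertices of the hypercube Q_d with |S| = s. Then the number of edges of Q_d with both endpoints in S is at most (s/2)·log₂ s. Equivalently (since Q_d is d-regular), the number of edges of Q_d with exactly one endpoint in S is at least s·(d − log₂ s). -/
open Finset Filter

noncomputable section
open scoped Classical

variable {V : Type*} [Fintype V] [DecidableEq V]

/-- Transition matrix of the simple random walk on a `d`-regular graph `G`:
from `u` the walk moves to a uniformly random neighbour. -/
def simpleStep (G : SimpleGraph V) (d : ℕ) : Matrix V V ℝ :=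
  Matrix.of fun u v => if G.Adj u v then ((d : ℝ))⁻¹ else 0

/-- Transition matrix of the lazy random walk `M = (1/2)(I + A/d)`. -/
def lazyStep (G : SimpleGraph V) (d : ℕ) : Matrix V V ℝ :=
  Matrix.of fun u v =>
    (if u = v then (2 : ℝ)⁻¹ else 0) + (2 : ℝ)⁻¹ * (if G.Adj u v then ((d : ℝ))⁻¹ else 0)

/-- Probability that the first `t` steps of the Markov chain with transition
matrix `M` started at `u` form a trajectory satisfying `E`:  the sum, over all
paths realizing the event, of the product of the transition probabilities. -/
def walkProb (M : Matrix V V ℝ) (u : V) (t : ℕ)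
    (E : (Fin (t + 1) → V) → Prop) : ℝ :=
  ∑ p : Fin (t + 1) → V,
    if p 0 = u ∧ E p then ∏ i : Fin t, M (p i.castSucc) (p i.succ) else 0

/-- The mixing time `T = min { t ≥ 1 : |M^t x y - 1/n| ≤ n⁻³ for all x,y }`. -/
def mixingTime (G : SimpleGraph V) (d : ℕ) : ℕ :=
  sInf {T : ℕ | 1 ≤ T ∧ ∀ x y : V,
    |((lazyStep G d) ^ T) x y - ((Fintype.card V : ℝ))⁻¹| ≤ (((Fintype.card V : ℝ)) ^ 3)⁻¹}

/-- Property P1: the second largest eigenvalue of the lazy walk matrix is at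
most `1 - g`, stated via the Rayleigh quotient on the orthogonal complement of
the constant (top) eigenvector. -/
def SpectralGapLB (G : SimpleGraph V) (d : ℕ) (g : ℝ) : Prop :=
  ∀ x : V → ℝ, (∑ v : V, x v) = 0 →
    (∑ u : V, ∑ v : V, x u * lazyStep G d u v * x v) ≤ (1 - g) * ∑ v : V, x v ^ 2

/-- Property P3 with constant `ρ₂`: for vertices `u,v` at distance at most
`d^ε`, the number of neighbours `w` of `v` with `dist w u ≤ dist u v` is at
most `ρ₂ · dist u v`. -/
def PropP3 (G : SimpleGraph V) (d : ℕ) (ε ρ₂ : ℝ) : Prop :=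
  ∀ u v : V, (G.dist u v : ℝ) ≤ (d : ℝ) ^ ε →
    (((univ : Finset V).filter fun w => G.Adj v w ∧ G.dist w u ≤ G.dist u v).card : ℝ) ≤
      ρ₂ * (G.dist u v : ℝ)

/-- The number of edges of `G` with both endpoints in `S`. -/
def edgesInside (G : SimpleGraph V) (S : Finset V) : ℕ :=
  ((S ×ˢ S).filter fun p => G.Adj p.1 p.2).card / 2

/-- The set of vertices of `G` not visited by the trajectory `p` at any step
`s` with `t₀ ≤ s` contains a connected (in the induced subgraph) subset of at
least `K` vertices; equivalently, the subgraph induced by this vacant set has a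
connected component with at least `K` vertices. -/
def bigVacantComponent (G : SimpleGraph V) {t : ℕ} (p : Fin (t + 1) → V)
    (t₀ : ℕ) (K : ℝ) : Prop :=
  ∃ S : Finset V, (∀ v ∈ S, ∀ s : Fin (t + 1), t₀ ≤ (s : ℕ) → p s ≠ v) ∧
    (G.induce (S : Set V)).Connected ∧ K ≤ (S.card : ℝ)


/-- The `d`-dimensional hypercube: vertices are `{0,1}^d`, two vertices are
adjacent iff they differ in exactly one coordinate (Hamming distance `1`). -/
def hypercube (d : ℕ) : SimpleGraph (Fin d → Bool) where
  Adj u v := hammingDist u v = 1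
  symm := by
    constructor
    intro u v h
    beta_reduce at *
    rwa [hammingDist_comm]
  loopless := by
    constructor
    intro u h
    beta_reduce at *
    rw [hammingDist_self] at h
    exact absurd h (by norm_num)

/-- The number of edges of `G` with exactly one endpoint in `S`. -/
def edgeBoundary (G : SimpleGraph V) (S : Finset V) : ℕ :=
  ((S ×ˢ Sᶜ).filter fun p => G.Adj p.1 p.2).card

/-!
Harper's induction on the dimension, counting ordered adjacent pairs and writing
`f x = x log₂ x`. Since `Q_{d+1} ≅ K₂ □ Q_d`, a set `S ⊆ Q_{d+1}` splits into two slices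
`A₀, A₁ ⊆ Q_d`, and the adjacent pairs of `S` are those of the slices plus two for each point
of `A₀ ∩ A₁`. By induction there are at most `f |A₀| + f |A₁| + 2 min |A₀| |A₁|` of them, and this
is at most `f (|A₀| + |A₁|)`: for `b ≤ a`, convexity of `f` gives `f (2b) - f b ≤ f (a + b) - f a`,
while `f (2b) - f b = 2b + f b`. The bound on the boundary then follows from `d`-regularity.
-/

theorem ConvexOn.map_add_sub_le_map_add_sub {𝕜 : Type*} [Field 𝕜] [LinearOrder 𝕜]
    [IsStrictOrderedRing 𝕜] {s : Set 𝕜} {f : 𝕜 → 𝕜} (hf : ConvexOn 𝕜 s f) {x y h : 𝕜}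
    (hx : x ∈ s) (hyh : y + h ∈ s) (hxy : x ≤ y) (hh : 0 ≤ h) :
    f (x + h) - f x ≤ f (y + h) - f y := by
  rcases hh.eq_or_lt with rfl | hh
  · simp
  have hmem : ∀ z ∈ Set.Icc x (y + h), z ∈ s := fun z hz => hf.1.ordConnected.out hx hyh hz
  have left := hf.secant_mono hx (hmem (x + h) ⟨by linarith, by linarith⟩) hyh
    (by linarith) (by linarith) (by linarith)
  have right := hf.secant_mono hyh hx (hmem y ⟨hxy, by linarith⟩) (by linarith) (by linarith) hxy
  rw [← neg_sub (f (y + h)), ← neg_sub (y + h) x, neg_div_neg_eq, ← neg_sub (f (y + h)) (f y),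
    show y - (y + h) = -h by ring, neg_div_neg_eq] at right
  rw [add_sub_cancel_left] at left
  exact (div_le_div_iff_of_pos_right hh).1 (left.trans right)

theorem Real.convexOn_mul_logb_two : ConvexOn ℝ (Set.Ici 0) fun x : ℝ => x * Real.logb 2 x := by
  refine (Real.convexOn_mul_log.smul (inv_nonneg.2 (Real.log_nonneg one_le_two))).congr ?_
  intro x _
  simp only [smul_eq_mul, Real.logb]
  ring

theorem Real.mul_logb_add_mul_logb_add_two_mul_min_le {a b : ℝ} (ha : 0 ≤ a) (hb : 0 ≤ b) :
    a * Real.logb 2 a + b * Real.logb 2 b + 2 * min a b ≤ (a + b) * Real.logb 2 (a + b) := by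
  wlog hba : b ≤ a generalizing a b
  · have := this hb ha (le_of_not_ge hba)
    rw [min_comm, add_comm b] at this
    linarith
  rw [min_eq_right hba]
  rcases hb.eq_or_lt with rfl | hb
  · simp
  have hinc := Real.convexOn_mul_logb_two.map_add_sub_le_map_add_sub (Set.mem_Ici.2 hb.le)
    (Set.mem_Ici.2 (add_nonneg ha hb.le)) hba hb.le
  have hdouble : (b + b) * Real.logb 2 (b + b) = 2 * b + 2 * (b * Real.logb 2 b) := by
    rw [← two_mul, Real.logb_mul two_ne_zero hb.ne', Real.logb_self_eq_one one_lt_two]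
    ring
  rw [add_comm a b] at hinc ⊢
  linarith

theorem hammingDist_cons {n : ℕ} {β : Type*} [DecidableEq β] (a b : β) (u v : Fin n → β) :
    hammingDist (Fin.cons a u : Fin (n + 1) → β) (Fin.cons b v) =
      (if a = b then 0 else 1) + hammingDist u v := by
  simp only [hammingDist, card_filter]
  rw [Fin.sum_univ_succ]
  simp [Fin.cons_zero, Fin.cons_succ]

namespace SimpleGraph

variable {α β : Type*}

theorem card_interedges_union_left (G : SimpleGraph α) [DecidableEq α] [DecidableRel G.Adj]
    {s₁ s₂ : Finset α} (hs : Disjoint s₁ s₂) (t : Finset α) :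
    #(G.interedges (s₁ ∪ s₂) t) = #(G.interedges s₁ t) + #(G.interedges s₂ t) := by
  rw [← card_union_of_disjoint (G.interedges_disjoint_left hs t), interedges_def, interedges_def,
    interedges_def, union_product, filter_union]

theorem card_interedges_union_right (G : SimpleGraph α) [DecidableEq α] [DecidableRel G.Adj]
    (s : Finset α) {t₁ t₂ : Finset α} (ht : Disjoint t₁ t₂) :
    #(G.interedges s (t₁ ∪ t₂)) = #(G.interedges s t₁) + #(G.interedges s t₂) := by
  rw [← card_union_of_disjoint (G.interedges_disjoint_right s ht), interedges_def, interedges_def,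
    interedges_def, product_union, filter_union]

theorem card_interedges_map {G : SimpleGraph α} {H : SimpleGraph β} [DecidableRel G.Adj]
    [DecidableRel H.Adj] (f : G ↪g H) (s t : Finset α) :
    #(H.interedges (s.map f.toEmbedding) (t.map f.toEmbedding)) = #(G.interedges s t) := by
  rw [← card_map (f.toEmbedding.prodMap f.toEmbedding)]
  congr 1
  ext ⟨x, y⟩
  simp only [mem_interedges_iff, Finset.mem_map, Function.Embedding.coe_prodMap, Prod.exists,
    Prod.map, Prod.mk.injEq]
  constructor
  · rintro ⟨⟨a, ha, rfl⟩, ⟨b, hb, rfl⟩, hab⟩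
    exact ⟨a, b, ⟨ha, hb, f.map_adj_iff.1 hab⟩, rfl, rfl⟩
  · rintro ⟨a, b, ⟨ha, hb, hab⟩, rfl, rfl⟩
    exact ⟨⟨a, ha, rfl⟩, ⟨b, hb, rfl⟩, f.map_adj_iff.2 hab⟩

theorem card_interedges_top_boxProd_map_map {γ : Type*} (G : SimpleGraph α)
    [DecidableRel ((⊤ : SimpleGraph γ) □ G).Adj] {a b : γ} (hab : a ≠ b) (s t : Finset α) :
    #(((⊤ : SimpleGraph γ) □ G).interedges (s.map (boxProdRight ⊤ G a).toEmbedding)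
      (t.map (boxProdRight ⊤ G b).toEmbedding)) = #(s ∩ t) := by
  rw [← card_image_of_injective (s ∩ t) (f := fun v => ((a, v), (b, v)))
    fun v w h => congrArg (fun p => p.1.2) h]
  congr 1
  ext ⟨⟨a', v⟩, ⟨b', w⟩⟩
  simp only [mem_interedges_iff, Finset.mem_map, Finset.mem_image, boxProd_adj, top_adj,
    RelEmbedding.coe_toEmbedding, boxProdRight_apply, mem_inter, Prod.mk.injEq]
  aesop

/-- `interedges S S` counts ordered pairs, so this says `2 e(S) ≤ |S| log₂ |S|`. -/
def EdgeIsoperimetric (G : SimpleGraph α) : Prop :=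
  ∀ S : Finset α, (#(G.interedges S S) : ℝ) ≤ #S * Real.logb 2 #S

theorem edgeIsoperimetric_bot : (⊥ : SimpleGraph α).EdgeIsoperimetric := by
  intro S
  simp only [interedges_def, bot_adj, filter_false, card_empty, CharP.cast_eq_zero, Real.logb]
  positivity

theorem EdgeIsoperimetric.of_iso {G : SimpleGraph α} {H : SimpleGraph β}
    (hG : G.EdgeIsoperimetric) (e : G ≃g H) : H.EdgeIsoperimetric := by
  intro S
  have hS : (S.map e.symm.toEmbedding.toEmbedding).map e.toEmbedding.toEmbedding = S := by
    simp [Finset.map_map]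
  rw [← hS, card_interedges_map e.toEmbedding, card_map]
  exact hG _

theorem EdgeIsoperimetric.top_boxProd {G : SimpleGraph α} (hG : G.EdgeIsoperimetric) :
    ((⊤ : SimpleGraph Bool) □ G).EdgeIsoperimetric := by
  intro S
  set ι : Bool → G ↪g (⊤ : SimpleGraph Bool) □ G := boxProdRight ⊤ G
  set A : Bool → Finset α := fun b => S.preimage (Prod.mk b) (Prod.mk_right_injective b).injOn
  have hS : S = (A false).map (ι false).toEmbedding ∪ (A true).map (ι true).toEmbedding := by
    ext ⟨b, v⟩
    cases b <;> simp [A, ι]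
  have hdisj :
      Disjoint ((A false).map (ι false).toEmbedding) ((A true).map (ι true).toEmbedding) := by
    rw [Finset.disjoint_left]
    simp [ι]
  have hcard : #S = #(A false) + #(A true) := by
    rw [hS, card_union_of_disjoint hdisj, card_map, card_map]
  have hinter : (#(A false ∩ A true) : ℝ) ≤ min (#(A false) : ℝ) #(A true) := by
    rw [← Nat.cast_min, Nat.cast_le]
    exact le_min (card_le_card inter_subset_left) (card_le_card inter_subset_right)
  have hsplit := Real.mul_logb_add_mul_logb_add_two_mul_min_le (#(A false)).cast_nonneg
    (#(A true)).cast_nonneg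
  rw [hcard, hS, card_interedges_union_left _ hdisj, card_interedges_union_right _ _ hdisj,
    card_interedges_union_right _ _ hdisj, card_interedges_map, card_interedges_map,
    card_interedges_top_boxProd_map_map _ Bool.false_ne_true,
    card_interedges_top_boxProd_map_map _ Bool.false_ne_true.symm, inter_comm (A true)]
  push_cast
  linarith [hG (A false), hG (A true)]

theorem IsRegularOfDegree.boxProd {G : SimpleGraph α} {H : SimpleGraph β} [G.LocallyFinite]
    [H.LocallyFinite] {m n : ℕ} (hG : G.IsRegularOfDegree m) (hH : H.IsRegularOfDegree n) :
    (G □ H).IsRegularOfDegree (m + n) := fun x => by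
  rw [degree_boxProd, hG.degree_eq, hH.degree_eq]

theorem IsRegularOfDegree.of_iso {G : SimpleGraph α} {H : SimpleGraph β} [G.LocallyFinite]
    [H.LocallyFinite] {k : ℕ} (hG : G.IsRegularOfDegree k) (e : G ≃g H) :
    H.IsRegularOfDegree k := fun v => by
  rw [← e.apply_symm_apply v, e.degree_eq, hG.degree_eq]

theorem card_interedges_add_edgeBoundary [Fintype α] [DecidableEq α] {G : SimpleGraph α}
    {k : ℕ} (hG : G.IsRegularOfDegree k) (S : Finset α) :
    #(G.interedges S S) + edgeBoundary G S = #S * k := by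
  change _ + #(G.interedges S Sᶜ) = _
  rw [← card_interedges_union_right _ _ disjoint_compl_right,
    union_compl, interedges_def, card_filter, sum_product, sum_const_nat]
  intro u _
  rw [← card_filter, ← neighborFinset_eq_filter]
  exact hG u

theorem hypercube_adj {d : ℕ} {u v : Fin d → Bool} :
    (hypercube d).Adj u v ↔ hammingDist u v = 1 := Iff.rfl

theorem hypercube_zero : hypercube 0 = ⊥ := by
  ext u v
  simp [Subsingleton.elim u v]

def hypercubeSuccIso (d : ℕ) : ((⊤ : SimpleGraph Bool) □ hypercube d) ≃g hypercube (d + 1) where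
  toEquiv := Fin.consEquiv fun _ => Bool
  map_rel_iff' := by
    rintro ⟨a, u⟩ ⟨b, v⟩
    by_cases hab : a = b <;>
      simp [hypercube_adj, Fin.consEquiv, hammingDist_cons, hab, hammingDist_eq_zero]

theorem hypercube_isRegularOfDegree (d : ℕ) : (hypercube d).IsRegularOfDegree d := by
  induction d with
  | zero =>
    rw [hypercube_zero]
    convert IsRegularOfDegree.bot (V := Fin 0 → Bool)
  | succ d ih =>
    simpa [add_comm] using (IsRegularOfDegree.top.boxProd ih).of_iso (hypercubeSuccIso d)

theorem edgeIsoperimetric_hypercube (d : ℕ) : (hypercube d).EdgeIsoperimetric := by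
  induction d with
  | zero => exact hypercube_zero ▸ edgeIsoperimetric_bot
  | succ d ih => exact ih.top_boxProd.of_iso (hypercubeSuccIso d)

end SimpleGraph

theorem hypercube_edge_isoperimetry_general (d : ℕ) (S : Finset (Fin d → Bool)) :
    (edgesInside (hypercube d) S : ℝ) ≤ (S.card : ℝ) / 2 * Real.logb 2 (S.card : ℝ) ∧
    (S.card : ℝ) * ((d : ℝ) - Real.logb 2 (S.card : ℝ)) ≤ (edgeBoundary (hypercube d) S : ℝ) := by
  have hpairs := SimpleGraph.edgeIsoperimetric_hypercube d S
  have hcount : (#((hypercube d).interedges S S) : ℝ) + edgeBoundary (hypercube d) S = #S * d := by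
    exact_mod_cast SimpleGraph.card_interedges_add_edgeBoundary
      (SimpleGraph.hypercube_isRegularOfDegree d) S
  constructor
  · calc (edgesInside (hypercube d) S : ℝ) = ((#((hypercube d).interedges S S) / 2 : ℕ) : ℝ) :=
          rfl
      _ ≤ #((hypercube d).interedges S S) / 2 := Nat.cast_div_le
      _ ≤ _ := by linarith
  · linarith

/-- Edge-isoperimetric inequality for the hypercube (Hart/Harper): a nonempty
set `S` of `s` vertices of `Q_d` spans at most `(s/2)·log₂ s` edges;
equivalently, since `Q_d` is `d`-regular, at least `s·(d - log₂ s)` edges join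
`S` to its complement. -/
theorem hypercube_edge_isoperimetry (d : ℕ) (S : Finset (Fin d → Bool))
    (hS : S.Nonempty) :
    (edgesInside (hypercube d) S : ℝ) ≤ (S.card : ℝ) / 2 * Real.logb 2 (S.card : ℝ) ∧
    (S.card : ℝ) * ((d : ℝ) - Real.logb 2 (S.card : ℝ)) ≤ (edgeBoundary (hypercube d) S : ℝ) :=
  hypercube_edge_isoperimetry_general d S

end
end

section
/- Let G be a d-regular simple graph, let v be a vertex of G, and let s ≥ 1. Then the number of vertex subsets S with v ∈ S, |S| = s, and such that the subgraph of G induced by S is connected, is at most (e·d)^{s−1}, where e is Euler's number. -/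
/-!
Grow a connected set `S ∋ v` from `v`, adding one neighbour of the current set at a time, and
address each new vertex by the word over `Fin d` of neighbour indices leading to it from `v`.
This yields a prefix-closed set `W` of `s` words whose endpoints are exactly `S`. Ranking `W`
lexicographically, `W` is recovered from the `s - 1` pairs `(rank a, j)` with `a ++ [j] ∈ W`, an
`(s - 1)`-subset of `{0, …, s - 1} × Fin d`. So there are at most
`C(sd, s - 1) ≤ (sd)^(s-1) / (s-1)! ≤ (e d)^(s-1)` such sets, the last step being
`s^s ≤ e^(s-1) s!`, which follows inductively from `(1 + 1/n)^n ≤ e`.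
-/

open Finset Filter

noncomputable section
open scoped Classical

variable {V : Type*} [Fintype V] [DecidableEq V]

open Real
open scoped Nat

theorem List.lt_append_singleton {α : Type*} [LinearOrder α] (a : List α) (j : α) :
    a < a ++ [j] := by
  simpa using List.Lex.append_left (· < ·) (List.Lex.nil (a := j) (l := [])) a

section PrefixTree

variable {α : Type*}

def IsPrefixTree (W : Finset (List α)) : Prop :=
  [] ∈ W ∧ ∀ w ∈ W, w.dropLast ∈ W

theorem isPrefixTree_singleton_nil : IsPrefixTree ({[]} : Finset (List α)) := by
  simp [IsPrefixTree]

theorem IsPrefixTree.insert_append_singleton [DecidableEq α] {W : Finset (List α)}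
    (hW : IsPrefixTree W) {a : List α} (ha : a ∈ W) (j : α) :
    IsPrefixTree (insert (a ++ [j]) W) := by
  refine ⟨mem_insert_of_mem hW.1, fun w hw => ?_⟩
  rcases mem_insert.1 hw with rfl | hw
  · rw [List.dropLast_concat]
    exact mem_insert_of_mem ha
  · exact mem_insert_of_mem (hW.2 w hw)

variable [LinearOrder α]

def lexRank (W : Finset (List α)) (a : List α) : ℕ :=
  #(W.filter (· < a))

theorem lexRank_lt_card {W : Finset (List α)} {a : List α} (ha : a ∈ W) : lexRank W a < #W :=
  card_lt_card (filter_ssubset.2 ⟨a, ha, lt_irrefl a⟩)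

theorem lexRank_injOn (W : Finset (List α)) : Set.InjOn (lexRank W) W := by
  have key : ∀ a ∈ W, ∀ b, a < b → lexRank W a < lexRank W b := fun a ha b hab =>
    card_lt_card <| (ssubset_iff_of_subset fun c hc => by
      simp only [mem_filter] at hc ⊢; exact ⟨hc.1, hc.2.trans hab⟩).2
      ⟨a, by simp [ha, hab], by simp⟩
  intro a ha b hb h
  rcases lt_trichotomy a b with hab | rfl | hab
  · exact absurd h (key a ha b hab).ne
  · rfl
  · exact absurd h (key b hb a hab).ne'

variable [Fintype α]

def treeCode (W : Finset (List α)) : Finset (ℕ × α) :=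
  ((W ×ˢ univ).filter fun p => p.1 ++ [p.2] ∈ W).image fun p => (lexRank W p.1, p.2)

theorem mem_treeCode {W : Finset (List α)} {r : ℕ} {j : α} :
    (r, j) ∈ treeCode W ↔ ∃ a ∈ W, a ++ [j] ∈ W ∧ lexRank W a = r := by
  simp only [treeCode, mem_image, mem_filter, mem_product, mem_univ, and_true, Prod.exists,
    Prod.mk.injEq]
  constructor
  · rintro ⟨a, j, ⟨ha, haj⟩, rfl, rfl⟩
    exact ⟨a, ha, haj, rfl⟩
  · rintro ⟨a, ha, haj, rfl⟩
    exact ⟨a, j, ⟨ha, haj⟩, rfl, rfl⟩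

theorem IsPrefixTree.card_treeCode {W : Finset (List α)} (hW : IsPrefixTree W) :
    #(treeCode W) = #W - 1 := by
  rw [treeCode, card_image_of_injOn, ← card_erase_of_mem hW.1]
  · refine card_bij (fun p _ => p.1 ++ [p.2]) (fun p hp => ?_) (fun p _ q _ h => ?_)
      (fun w hw => ?_)
    · simpa using (mem_filter.1 hp).2
    · simpa [Prod.ext_iff] using h
    · obtain ⟨hw0, hw⟩ := mem_erase.1 hw
      obtain ⟨a, j, rfl⟩ := (w.eq_nil_or_concat).resolve_left hw0
      rw [List.concat_eq_append] at hw ⊢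
      have ha : a ∈ W := by simpa using hW.2 _ hw
      exact ⟨(a, j), by simpa using ⟨ha, hw⟩, rfl⟩
  · rintro p hp q hq h
    simp only [mem_coe, mem_filter, mem_product] at hp hq
    simp only [Prod.mk.injEq] at h
    exact Prod.ext (lexRank_injOn W hp.1.1 hq.1.1 h.1) h.2

theorem treeCode_subset (W : Finset (List α)) : treeCode W ⊆ range #W ×ˢ univ := by
  rintro ⟨r, j⟩ h
  obtain ⟨a, ha, -, rfl⟩ := mem_treeCode.1 h
  simpa using lexRank_lt_card ha

theorem IsPrefixTree.mem_of_treeCode_eq {W W' : Finset (List α)} (hW : IsPrefixTree W)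
    (hW' : IsPrefixTree W') (hcode : treeCode W = treeCode W') {w : List α} (hw : w ∈ W)
    (hbelow : ∀ b < w, b ∈ W ↔ b ∈ W') : w ∈ W' := by
  obtain rfl | ⟨a, j, rfl⟩ := w.eq_nil_or_concat
  · exact hW'.1
  rw [List.concat_eq_append] at hw hbelow ⊢
  have haw := List.lt_append_singleton a j
  have ha : a ∈ W := by simpa using hW.2 _ hw
  have hrank : lexRank W a = lexRank W' a := by
    unfold lexRank
    congr 1
    ext b
    simp only [mem_filter]
    exact and_congr_left fun hba => hbelow b (hba.trans haw)
  obtain ⟨a', ha', ha'j, hra⟩ := mem_treeCode.1 (hcode ▸ mem_treeCode.2 ⟨a, ha, hw, rfl⟩)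
  rwa [lexRank_injOn W' ha' ((hbelow a haw).1 ha) (hra.trans hrank)] at ha'j

theorem IsPrefixTree.eq_of_treeCode_eq {W W' : Finset (List α)} (hW : IsPrefixTree W)
    (hW' : IsPrefixTree W') (hcode : treeCode W = treeCode W') : W = W' := by
  by_contra hne
  have hD := symmDiff_nonempty.2 hne
  have hbelow : ∀ b < (symmDiff W W').min' hD, b ∈ W ↔ b ∈ W' := fun b hb => by
    by_contra h
    exact (min'_le _ b (mem_symmDiff.2 (by tauto))).not_gt hb
  rcases mem_symmDiff.1 (min'_mem _ hD) with ⟨hw, hw'⟩ | ⟨hw', hw⟩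
  · exact hw' (hW.mem_of_treeCode_eq hW' hcode hw hbelow)
  · exact hw (hW'.mem_of_treeCode_eq hW hcode.symm hw' fun b hb => (hbelow b hb).symm)

theorem card_le_choose_of_isPrefixTree {s : ℕ} (𝒲 : Finset (Finset (List α)))
    (h𝒲 : ∀ W ∈ 𝒲, IsPrefixTree W ∧ #W = s) :
    #𝒲 ≤ (s * Fintype.card α).choose (s - 1) := by
  calc #𝒲 ≤ #((range s ×ˢ (univ : Finset α)).powersetCard (s - 1)) := by
        refine card_le_card_of_injOn treeCode (fun W hW => ?_) fun W hW W' hW' h =>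
          (h𝒲 W hW).1.eq_of_treeCode_eq (h𝒲 W' hW').1 h
        obtain ⟨hW, rfl⟩ := h𝒲 W hW
        exact mem_powersetCard.2 ⟨treeCode_subset W, hW.card_treeCode⟩
    _ = (s * Fintype.card α).choose (s - 1) := by simp

end PrefixTree

namespace SimpleGraph

theorem exists_neighbor_indexing {V : Type*} (G : SimpleGraph V) [G.LocallyFinite] {d : ℕ}
    (hdeg : ∀ u, G.degree u ≤ d) :
    ∃ f : V → Fin d → V, ∀ u w, G.Adj u w → ∃ i, f u i = w := by
  refine ⟨fun u i => (G.neighborFinset u).toList.getD i u, fun u w huw => ?_⟩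
  obtain ⟨i, hi, rfl⟩ :=
    List.mem_iff_getElem.1 (mem_toList.2 ((G.mem_neighborFinset u w).2 huw))
  have hid : i < d := by
    rw [length_toList, card_neighborFinset_eq_degree] at hi
    exact hi.trans_le (hdeg u)
  exact ⟨⟨i, hid⟩, List.getD_eq_getElem _ _ hi⟩

theorem exists_adj_of_connected_induce {V : Type*} {G : SimpleGraph V} {S T : Finset V}
    (hS : (G.induce (S : Set V)).Connected) (hTS : T ⊆ S) (hT : T.Nonempty) (hne : T ≠ S) :
    ∃ x ∈ T, ∃ y ∈ S, y ∉ T ∧ G.Adj x y := by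
  obtain ⟨x, hx⟩ := hT
  obtain ⟨y, hyS, hyT⟩ := exists_of_ssubset (hTS.ssubset_of_ne hne)
  obtain ⟨p⟩ := hS.preconnected ⟨x, hTS hx⟩ ⟨y, hyS⟩
  obtain ⟨e, -, he₁, he₂⟩ := p.exists_boundary_dart {z | z.1 ∈ T} hx hyT
  exact ⟨e.fst, he₁, e.snd, e.snd.2, he₂, e.adj⟩

theorem exists_isPrefixTree_image_foldl_eq {V : Type*} [DecidableEq V] {G : SimpleGraph V}
    {d : ℕ} {f : V → Fin d → V} (hf : ∀ u w, G.Adj u w → ∃ i, f u i = w) {S : Finset V}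
    {v : V} (hS : (G.induce (S : Set V)).Connected) (hv : v ∈ S) :
    ∃ W : Finset (List (Fin d)), IsPrefixTree W ∧ #W = #S ∧ W.image (·.foldl f v) = S := by
  have grow : ∀ k, 1 ≤ k → k ≤ #S → ∃ W : Finset (List (Fin d)),
      IsPrefixTree W ∧ #W = k ∧ #(W.image (·.foldl f v)) = k ∧
        W.image (·.foldl f v) ⊆ S := by
    intro k hk
    induction k, hk using Nat.le_induction with
    | base => exact fun _ => ⟨{[]}, isPrefixTree_singleton_nil, rfl, rfl, by simpa using hv⟩
    | succ k hk ih =>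
      intro hkS
      obtain ⟨W, hW, hWk, hTk, hTS⟩ := ih (by omega)
      obtain ⟨x, hx, y, hyS, hyT, hxy⟩ := exists_adj_of_connected_induce hS hTS
        ⟨v, mem_image.2 ⟨[], hW.1, rfl⟩⟩ (fun h => by rw [h] at hTk; omega)
      obtain ⟨a, ha, rfl⟩ := mem_image.1 hx
      obtain ⟨i, rfl⟩ := hf _ _ hxy
      have hnew : (a ++ [i]).foldl f v = f (a.foldl f v) i := List.foldl_concat ..
      have haW : a ++ [i] ∉ W := fun h => hyT (mem_image.2 ⟨_, h, hnew⟩)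
      refine ⟨insert (a ++ [i]) W, hW.insert_append_singleton ha i, ?_, ?_, ?_⟩
      · rw [card_insert_of_notMem haW, hWk]
      · rw [image_insert, hnew, card_insert_of_notMem hyT, hTk]
      · rw [image_insert, hnew]
        exact insert_subset hyS hTS
  obtain ⟨W, hW, hWS, hTS, hsub⟩ := grow #S (card_pos.2 ⟨v, hv⟩) le_rfl
  exact ⟨W, hW, hWS, eq_of_subset_of_card_le hsub hTS.ge⟩

theorem card_connected_subsets_le_choose (G : SimpleGraph V) {d : ℕ}
    (hdeg : ∀ u, G.degree u ≤ d) (v : V) (s : ℕ) :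
    #((univ : Finset (Finset V)).filter fun S : Finset V =>
        v ∈ S ∧ S.card = s ∧ (G.induce (S : Set V)).Connected) ≤
      (s * d).choose (s - 1) := by
  obtain ⟨f, hf⟩ := G.exists_neighbor_indexing hdeg
  set 𝒮 := (univ : Finset (Finset V)).filter fun S : Finset V =>
    v ∈ S ∧ S.card = s ∧ (G.induce (S : Set V)).Connected
  have hcode : ∀ S ∈ 𝒮, ∃ W : Finset (List (Fin d)),
      IsPrefixTree W ∧ #W = s ∧ W.image (·.foldl f v) = S := by
    intro S hS
    obtain ⟨-, hv, rfl, hconn⟩ := mem_filter.1 hS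
    exact exists_isPrefixTree_image_foldl_eq hf hconn hv
  choose! T hT using hcode
  have hinj : Set.InjOn T 𝒮 := fun S hS S' hS' h =>
    (hT S hS).2.2.symm.trans (h ▸ (hT S' hS').2.2)
  calc #𝒮 = #(𝒮.image T) := (card_image_of_injOn hinj).symm
    _ ≤ (s * Fintype.card (Fin d)).choose (s - 1) :=
      card_le_choose_of_isPrefixTree _ <|
        forall_mem_image.2 fun S hS => ⟨(hT S hS).1, (hT S hS).2.1⟩
    _ = (s * d).choose (s - 1) := by rw [Fintype.card_fin]

end SimpleGraph

theorem add_one_pow_le_exp_one_mul_pow (n : ℕ) : ((n : ℝ) + 1) ^ n ≤ exp 1 * n ^ n := by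
  rcases n.eq_zero_or_pos with rfl | hn
  · simp
  calc ((n : ℝ) + 1) ^ n = (1 + (n : ℝ)⁻¹) ^ n * n ^ n := by
        rw [← mul_pow]
        field_simp
    _ ≤ exp 1 * n ^ n := by gcongr; exact one_add_inv_pow_le_exp

theorem add_one_pow_succ_le_exp_one_pow_mul_factorial (n : ℕ) :
    ((n : ℝ) + 1) ^ (n + 1) ≤ exp 1 ^ n * (n + 1)! := by
  induction n with
  | zero => simp
  | succ n ih =>
    calc ((n + 1 : ℕ) + 1 : ℝ) ^ (n + 1 + 1)
          = (n + 2) * ((n + 1 : ℕ) + 1 : ℝ) ^ (n + 1) := by push_cast; ring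
      _ ≤ (n + 2) * (exp 1 * (n + 1) ^ (n + 1)) := by
          gcongr; exact_mod_cast add_one_pow_le_exp_one_mul_pow (n + 1)
      _ ≤ (n + 2) * (exp 1 * (exp 1 ^ n * (n + 1)!)) := by gcongr
      _ = exp 1 ^ (n + 1) * (n + 1 + 1)! := by
          push_cast [Nat.factorial_succ (n + 1)]; ring

theorem choose_mul_sub_one_le (s d : ℕ) :
    ((s * d).choose (s - 1) : ℝ) ≤ (exp 1 * d) ^ (s - 1) := by
  rcases s with _ | m
  · simp
  rw [Nat.add_sub_cancel]
  calc (((m + 1) * d).choose m : ℝ) ≤ (((m + 1) * d : ℕ) : ℝ) ^ m / m ! :=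
        Nat.choose_le_pow_div m _
    _ = ((m : ℝ) + 1) ^ (m + 1) / (m + 1)! * d ^ m := by
        rw [Nat.cast_mul, mul_pow, Nat.factorial_succ, Nat.cast_mul, pow_succ]
        push_cast
        field_simp
    _ ≤ exp 1 ^ m * d ^ m := by
        gcongr
        rw [div_le_iff₀ (by positivity)]
        exact add_one_pow_succ_le_exp_one_pow_mul_factorial m
    _ = (exp 1 * d) ^ m := (mul_pow ..).symm

theorem count_connected_subsets_general (G : SimpleGraph V) (d : ℕ)
    (hreg : G.IsRegularOfDegree d) (v : V) (s : ℕ) :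
    (((univ : Finset (Finset V)).filter fun S : Finset V =>
        v ∈ S ∧ S.card = s ∧ (G.induce (S : Set V)).Connected).card : ℝ) ≤
      (Real.exp 1 * (d : ℝ)) ^ (s - 1) :=
  calc _ ≤ ((s * d).choose (s - 1) : ℝ) := by
        exact_mod_cast G.card_connected_subsets_le_choose (fun u => (hreg u).le) v s
    _ ≤ _ := choose_mul_sub_one_le s d

/-- In a `d`-regular graph, the number of vertex subsets `S` of size `s` that
contain a fixed vertex `v` and induce a connected subgraph is at most
`(e·d)^(s-1)`. -/
theorem count_connected_subsets (G : SimpleGraph V) (d : ℕ)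
    (hreg : G.IsRegularOfDegree d) (v : V) (s : ℕ) (hs : 1 ≤ s) :
    (((univ : Finset (Finset V)).filter fun S : Finset V =>
        v ∈ S ∧ S.card = s ∧ (G.induce (S : Set V)).Connected).card : ℝ) ≤
      (Real.exp 1 * (d : ℝ)) ^ (s - 1) :=
  count_connected_subsets_general G d hreg v s

end
end

section
/- Let H be a finite connected graph on n vertices with m edges, let S be a nonempty proper subset of its vertices, and let u ∉ S. Let Γ be the multigraph obtained from H by contracting S to a single vertex γ, retaining all edges (edges inside S become loops at γ). Suppose T ≥ 1 is such that for all t ≥ T the lazy walk on H satisfies |P_x^t(y) − d_H(y)/(2m)| ≤ n^{−3} for all vertices x,y, and the lazy walk on Γ satisfies the analogous bound with stationary probabilities d_Γ(y)/(2m). Then there is an absolute constant C such that for all t ≥ T, the probability that the lazy walk on H started at u avoids every vertex of S at all steps s with T ≤ s ≤ t differs from the probability that the lazy walk on Γ started at u avoids γ at all steps s with T ≤ s ≤ t by at most C/n². -/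
open Finset Filter

noncomputable section
open scoped Classical

variable {V : Type*} [Fintype V] [DecidableEq V]

/-- The degree of `x` in `H`. -/
def degH (H : SimpleGraph V) (x : V) : ℕ :=
  ((univ : Finset V).filter fun y => H.Adj x y).card

/-- Transition matrix of the lazy random walk on a (not necessarily regular)
graph `H`: stay put with probability 1/2, otherwise traverse each incident
edge with equal probability. -/
def lazyH (H : SimpleGraph V) : Matrix V V ℝ :=
  Matrix.of fun x y =>
    (if x = y then (2 : ℝ)⁻¹ else 0) +
      (if H.Adj x y then ((2 : ℝ) * (degH H x : ℝ))⁻¹ else 0)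

/-- Transition matrix of the lazy random walk on the multigraph `Γ` obtained
from `H` by contracting `S` to a single vertex `γ` (represented by `Sum.inr ()`),
retaining all edges; edges inside `S` become loops at `γ`. -/
def contractedLazyH (H : SimpleGraph V) (S : Finset V) :
    Matrix ({x : V // x ∉ S} ⊕ Unit) ({x : V // x ∉ S} ⊕ Unit) ℝ :=
  Matrix.of fun a b =>
    match a, b with
    | Sum.inl x, Sum.inl y => lazyH H x.1 y.1
    | Sum.inl x, Sum.inr _ =>
        ((S.filter fun z => H.Adj x.1 z).card : ℝ) / (2 * (degH H x.1 : ℝ))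
    | Sum.inr _, Sum.inl y =>
        ((S.filter fun z => H.Adj z y.1).card : ℝ) / (2 * ∑ w ∈ S, (degH H w : ℝ))
    | Sum.inr _, Sum.inr _ =>
        (2 : ℝ)⁻¹ + (edgesInside H S : ℝ) / (∑ w ∈ S, (degH H w : ℝ))

/-- The degree in `Γ` (loops counted twice): `d_Γ(γ) = Σ_{v ∈ S} d_H(v)`, and
vertices outside `S` keep their `H`-degree. -/
def degGamma (H : SimpleGraph V) (S : Finset V) : ({x : V // x ∉ S} ⊕ Unit) → ℕ
  | Sum.inl x => degH H x.1
  | Sum.inr _ => ∑ w ∈ S, degH H w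

/-!
By the Markov property at time `T`, each probability equals `∑_{x ∉ S} P^T(u, x) g(x)` for the
`T`-step kernel `P^T` of the respective walk, where `g(x)` is the probability of staying outside `S`
(resp. away from `γ`) for `t - T` steps from `x`. A walk outside `S` makes the same transitions in
`H` and in `Γ`, so `g` is the same function for both walks, with values in `[0, 1]`. The difference
is therefore at most `∑_{x ∉ S} |P_H^T(u, x) - P_Γ^T(u, x)| ≤ n · 2n⁻³`.
-/

section WalkProb

variable {U W : Type*} [Fintype U] [DecidableEq U] [Fintype W] [DecidableEq W]

lemma walkProb_congr (M : Matrix V V ℝ) (u : V) (t : ℕ) {E E' : (Fin (t + 1) → V) → Prop}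
    (h : ∀ p, E p ↔ E' p) : walkProb M u t E = walkProb M u t E' :=
  Finset.sum_congr rfl fun p _ => if_congr (and_congr_right fun _ => h p) rfl rfl

lemma walkProb_mono {M : Matrix V V ℝ} (hM : ∀ x y, 0 ≤ M x y) (u : V) (t : ℕ)
    {E E' : (Fin (t + 1) → V) → Prop} (h : ∀ p, E p → E' p) :
    walkProb M u t E ≤ walkProb M u t E' := by
  refine Finset.sum_le_sum fun p _ => ?_
  by_cases hp : p 0 = u ∧ E p
  · rw [if_pos hp, if_pos ⟨hp.1, h p hp.2⟩]
  · rw [if_neg hp]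
    split_ifs
    exacts [Finset.prod_nonneg fun i _ => hM _ _, le_rfl]

lemma walkProb_nonneg {M : Matrix V V ℝ} (hM : ∀ x y, 0 ≤ M x y) (u : V) (t : ℕ)
    (E : (Fin (t + 1) → V) → Prop) : 0 ≤ walkProb M u t E :=
  Finset.sum_nonneg fun p _ => by
    split_ifs
    exacts [Finset.prod_nonneg fun i _ => hM _ _, le_rfl]

lemma walkProb_eq_zero_of_not_start (M : Matrix V V ℝ) (u : V) (t : ℕ)
    {E : (Fin (t + 1) → V) → Prop} (h : ∀ p, p 0 = u → ¬ E p) :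
    walkProb M u t E = 0 :=
  Finset.sum_eq_zero fun p _ => if_neg fun hp => h p hp.1 hp.2

lemma walkProb_zero (M : Matrix V V ℝ) (u : V) (E : (Fin 1 → V) → Prop) :
    walkProb M u 0 E = if E (fun _ => u) then 1 else 0 := by
  rw [walkProb, ← (Equiv.funUnique (Fin 1) V).symm.sum_comp]
  simp only [Equiv.funUnique, Equiv.piUnique_symm_apply, uniqueElim_const, univ_eq_empty,
    prod_const, card_empty, pow_zero, ite_and, sum_ite_eq', mem_univ, if_true]
  rfl

lemma walkProb_succ (M : Matrix V V ℝ) (u : V) (t : ℕ)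
    (E : (Fin (t + 1) → V) → Prop) (E' : (Fin (t + 2) → V) → Prop)
    (hE : ∀ x q, E' (Fin.cons x q) ↔ E q) :
    walkProb M u (t + 1) E' = ∑ y, M u y * walkProb M y t E := by
  simp only [walkProb, Finset.mul_sum]
  rw [← (Fin.consEquiv fun _ : Fin (t + 2) => V).sum_comp]
  rw [Fintype.sum_prod_type, Finset.sum_comm]
  conv_rhs => rw [Finset.sum_comm]
  simp only [Fin.consEquiv, Equiv.coe_fn_mk, Fin.cons_zero, hE, Fin.prod_univ_succ, Fin.cons_succ,
    Fin.castSucc_zero, ← Fin.succ_castSucc, ite_and, mul_ite, mul_zero, Finset.sum_ite_eq',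
    Finset.sum_ite_eq, Finset.mem_univ, if_true]

lemma walkProb_true_le_one {M : Matrix V V ℝ} (hM : ∀ x y, 0 ≤ M x y)
    (hrow : ∀ x, ∑ y, M x y ≤ 1) (t : ℕ) (u : V) : walkProb M u t (fun _ => True) ≤ 1 := by
  induction t generalizing u with
  | zero => simp [walkProb_zero]
  | succ t ih =>
    rw [walkProb_succ M u t (fun _ => True) _ fun _ _ => Iff.rfl]
    calc ∑ y, M u y * walkProb M y t (fun _ => True)
        ≤ ∑ y, M u y := Finset.sum_le_sum fun y _ => mul_le_of_le_one_right (hM u y) (ih y)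
      _ ≤ 1 := hrow u

lemma walkProb_le_one {M : Matrix V V ℝ} (hM : ∀ x y, 0 ≤ M x y)
    (hrow : ∀ x, ∑ y, M x y ≤ 1) (u : V) (t : ℕ) (E : (Fin (t + 1) → V) → Prop) :
    walkProb M u t E ≤ 1 :=
  (walkProb_mono hM u t fun _ _ => trivial).trans (walkProb_true_le_one hM hrow t u)

lemma walkProb_forall_ge (M : Matrix V V ℝ) (A : V → Prop) (T : ℕ) :
    ∀ t, T ≤ t → ∀ u : V,
      walkProb M u t (fun p => ∀ s : Fin (t + 1), T ≤ (s : ℕ) → A (p s)) =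
        ∑ y, (M ^ T) u y * walkProb M y (t - T) (fun p => ∀ s, A (p s)) := by
  induction T with
  | zero =>
    intro t _ u
    simp [Matrix.one_apply]
  | succ T ih =>
    intro t ht u
    obtain ⟨t, rfl⟩ : ∃ t', t = t' + 1 := ⟨t - 1, by omega⟩
    rw [walkProb_succ M u t (fun q => ∀ s : Fin (t + 1), T ≤ (s : ℕ) → A (q s)),
      Nat.add_sub_add_right]
    · simp_rw [ih t (by omega), pow_succ', Matrix.mul_apply, Finset.sum_mul, Finset.mul_sum,
        mul_assoc]
      exact Finset.sum_comm
    · intro x q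
      refine ⟨fun h s hs => by simpa using h s.succ (by simpa using hs), fun h s hs => ?_⟩
      induction s using Fin.cases with
      | zero => simp at hs
      | succ s => simpa using h s (by simpa using hs)

/-- Paths staying in the image of `f` are the images of paths in `U`. -/
lemma walkProb_forall_mem_range (M : Matrix V V ℝ) {f : U → V} (hf : Function.Injective f)
    (a : U) (t : ℕ) :
    walkProb M (f a) t (fun p => ∀ s, p s ∈ Set.range f) =
      walkProb (M.submatrix f f) a t (fun _ => True) := by
  symm
  refine Fintype.sum_of_injective (fun q => f ∘ q) (fun q q' h => funext fun i =>
    hf (congrFun h i)) _ _ (fun p hp => if_neg ?_) fun q => ?_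
  · rintro ⟨-, hrange⟩
    choose q hq using hrange
    exact hp ⟨q, funext hq⟩
  · simp [hf.eq_iff]

lemma walkProb_forall_ge_mem_range (M : Matrix V V ℝ) {f : U → V} (hf : Function.Injective f)
    {T t : ℕ} (hT : T ≤ t) (a : U) :
    walkProb M (f a) t (fun p => ∀ s : Fin (t + 1), T ≤ (s : ℕ) → p s ∈ Set.range f) =
      ∑ x, (M ^ T) (f a) (f x) * walkProb (M.submatrix f f) x (t - T) (fun _ => True) := by
  rw [walkProb_forall_ge M _ T t hT]
  refine (Fintype.sum_of_injective f hf _ _ (fun y hy => ?_) fun x => ?_).symm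
  · have : walkProb M y (t - T) (fun p => ∀ s, p s ∈ Set.range f) = 0 :=
      walkProb_eq_zero_of_not_start _ _ _ fun p hp hE => hy (hp ▸ hE 0)
    rw [this, mul_zero]
  · rw [walkProb_forall_mem_range M hf]

theorem abs_walkProb_sub_walkProb_le {M : Matrix V V ℝ} {N : Matrix W W ℝ}
    (hM : ∀ x y, 0 ≤ M x y) (hrow : ∀ x, ∑ y, M x y ≤ 1)
    {f : U → V} {g : U → W} (hf : Function.Injective f) (hg : Function.Injective g)
    (hMN : M.submatrix f f = N.submatrix g g) {T t : ℕ} (hT : T ≤ t) (a : U) {ε : ℝ}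
    (hε : ∀ x, |(M ^ T) (f a) (f x) - (N ^ T) (g a) (g x)| ≤ ε) :
    |walkProb M (f a) t (fun p => ∀ s : Fin (t + 1), T ≤ (s : ℕ) → p s ∈ Set.range f) -
      walkProb N (g a) t (fun p => ∀ s : Fin (t + 1), T ≤ (s : ℕ) → p s ∈ Set.range g)| ≤
      Fintype.card U * ε := by
  have hw : ∀ x, |walkProb (M.submatrix f f) x (t - T) (fun _ => True)| ≤ 1 := fun x => by
    rw [abs_of_nonneg (walkProb_nonneg (M := M.submatrix f f) (fun _ _ => hM _ _) _ _ _),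
      ← walkProb_forall_mem_range M hf]
    exact walkProb_le_one hM hrow _ _ _
  rw [walkProb_forall_ge_mem_range M hf hT, walkProb_forall_ge_mem_range N hg hT, ← hMN,
    ← Finset.sum_sub_distrib]
  set w := fun x => walkProb (M.submatrix f f) x (t - T) (fun _ => True)
  calc |∑ x, ((M ^ T) (f a) (f x) * w x - (N ^ T) (g a) (g x) * w x)|
      ≤ ∑ x, |(M ^ T) (f a) (f x) - (N ^ T) (g a) (g x)| * |w x| := by
        simp_rw [← sub_mul, ← abs_mul]
        exact Finset.abs_sum_le_sum_abs _ _
    _ ≤ ∑ _x : U, ε := Finset.sum_le_sum fun x _ =>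
        (mul_le_of_le_one_right (abs_nonneg _) (hw x)).trans (hε x)
    _ = Fintype.card U * ε := by simp

end WalkProb

lemma lazyH_nonneg (H : SimpleGraph V) (x y : V) : 0 ≤ lazyH H x y := by
  simp only [lazyH, Matrix.of_apply]
  positivity

lemma sum_lazyH_le_one (H : SimpleGraph V) (x : V) : ∑ y, lazyH H x y ≤ 1 := by
  have hdeg : (degH H x : ℝ) * (2 * (degH H x : ℝ))⁻¹ ≤ 2⁻¹ := by
    rcases eq_or_ne (degH H x : ℝ) 0 with h | h
    · simp [h]
    · rw [mul_inv, mul_left_comm, mul_inv_cancel₀ h, mul_one]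
  simp only [lazyH, Matrix.of_apply, Finset.sum_add_distrib, Finset.sum_ite_eq,
    Finset.mem_univ, if_true, Finset.sum_ite, Finset.sum_const_zero, add_zero,
    Finset.sum_const, nsmul_eq_mul]
  change 2⁻¹ + (degH H x : ℝ) * (2 * (degH H x : ℝ))⁻¹ ≤ 1
  linarith

/-- **Contraction lemma**: there is an absolute constant `C` such that for any
connected graph `H` on `n` vertices, nonempty proper vertex subset `S`, start
`u ∉ S` and `T ≥ 1` with both walks within `n⁻³` of stationarity (stationary
probability `deg(y)/(2m)`, and `2m = Σ_v deg v`) at all times `t ≥ T`, the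
probability that the lazy walk on `H` avoids `S` at all steps in `[T,t]`
differs from the probability that the lazy walk on `Γ` avoids `γ` at all steps
in `[T,t]` by at most `C/n²`. -/
theorem contraction_lemma :
    ∃ C : ℝ, 0 < C ∧
      ∀ (V : Type) [Fintype V] [DecidableEq V] (H : SimpleGraph V)
        (S : Finset V) (u : V) (hu : u ∉ S) (T : ℕ),
        H.Connected → S.Nonempty → S ≠ (univ : Finset V) → 1 ≤ T →
        (∀ t, T ≤ t → ∀ x y : V,
          |((lazyH H) ^ t) x y - (degH H y : ℝ) / (∑ w : V, (degH H w : ℝ))| ≤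
            ((Fintype.card V : ℝ) ^ 3)⁻¹) →
        (∀ t, T ≤ t → ∀ a b : {x : V // x ∉ S} ⊕ Unit,
          |((contractedLazyH H S) ^ t) a b -
              (degGamma H S b : ℝ) / (∑ w : V, (degH H w : ℝ))| ≤
            ((Fintype.card V : ℝ) ^ 3)⁻¹) →
        ∀ t, T ≤ t →
          |walkProb (lazyH H) u t
              (fun p => ∀ s : Fin (t + 1), T ≤ (s : ℕ) → p s ∉ S) -
            walkProb (contractedLazyH H S) (Sum.inl ⟨u, hu⟩) t
              (fun p => ∀ s : Fin (t + 1), T ≤ (s : ℕ) → p s ≠ Sum.inr ())| ≤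
          C / (Fintype.card V : ℝ) ^ 2 := by
  refine ⟨2, two_pos, fun V _ _ H S u hu T _ _ _ _ hH hΓ t ht => ?_⟩
  set n : ℝ := (Fintype.card V : ℝ)
  have hn : 0 < n := Nat.cast_pos.mpr (Fintype.card_pos_iff.mpr ⟨u⟩)
  have hε : ∀ x : {x // x ∉ S}, |(lazyH H ^ T) u x -
      (contractedLazyH H S ^ T) (Sum.inl ⟨u, hu⟩) (Sum.inl x)| ≤ 2 * (n ^ 3)⁻¹ := fun x => by
    have hHx := abs_le.mp (hH T le_rfl u x)
    have hΓx := abs_le.mp (hΓ T le_rfl (Sum.inl ⟨u, hu⟩) (Sum.inl x))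
    simp only [degGamma] at hΓx
    exact abs_le.mpr ⟨by linarith, by linarith⟩
  have hsub : (lazyH H).submatrix Subtype.val Subtype.val =
      (contractedLazyH H S).submatrix Sum.inl Sum.inl := rfl
  rw [walkProb_congr _ _ _ (E' := fun p => ∀ s : Fin (t + 1), T ≤ (s : ℕ) →
      p s ∈ Set.range (Subtype.val : {x // x ∉ S} → V)) fun p => by simp,
    walkProb_congr _ _ _ (E' := fun p => ∀ s : Fin (t + 1), T ≤ (s : ℕ) →
      p s ∈ Set.range (Sum.inl : {x // x ∉ S} → _)) fun p =>
      forall₂_congr fun s _ => by rcases p s with x | ⟨⟩ <;> simp]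
  calc _ ≤ Fintype.card {x // x ∉ S} * (2 * (n ^ 3)⁻¹) :=
        abs_walkProb_sub_walkProb_le (lazyH_nonneg H) (sum_lazyH_le_one H)
          Subtype.val_injective Sum.inl_injective hsub ht ⟨u, hu⟩ hε
    _ ≤ n * (2 * (n ^ 3)⁻¹) := by
        gcongr
        exact Nat.cast_le.mpr (Fintype.card_subtype_le _)
    _ = 2 / n ^ 2 := by field_simp

end
end

section
/- Let G be a d-regular simple graph satisfying property P3 with constant ρ₂ for some ε ∈ (0,1), and suppose d^{ε/2} ≥ 4·ρ₂. Let U be a set of vertices and v ∈ U, and suppose that every vertex at graph distance at most ⌊d^{ε/2}⌋ from v has at least d^ε/2 neighbours in U. Then the connected component of v in the subgraph of G induced by U has at least (d^{ε/2}/(4·ρ₂))^{⌊d^{ε/2}/2⌋} vertices. -/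
open Finset Filter

/-! Let `L k` be the set of vertices of the component at distance exactly `k` from `v`.
A vertex of `L k` has at least `d^ε/2` neighbours in `U`, all of them in the component; by P3
at most `ρ₂ k` of them are within distance `k` of `v`, and the others lie in `L (k+1)`.
Conversely, by P3 a vertex of `L (k+1)` has at most `ρ₂ (k+1)` neighbours in `L k`. Double
counting the edges between consecutive levels gives `|L (k+1)| ≥ d^(ε/2)/(4ρ₂) · |L k|` while
`k + 1 ≤ d^(ε/2)/2`, and we iterate from `L 0 = {v}`. -/

open scoped Classical

namespace SimpleGraph

variable {V : Type*} {G : SimpleGraph V}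

-- No reachability hypothesis is needed: if `v` cannot reach `w`, both distances are `0`.
theorem Adj.dist_le_dist_add_one {w x : V} (h : G.Adj w x) (v : V) :
    G.dist v x ≤ G.dist v w + 1 := by
  rcases h.diff_dist_adj (u := v) with h | h | h <;> omega

theorem ConnectedComponent.mem_image_val_supp_of_adj {U : Set V}
    {C : (G.induce U).ConnectedComponent} {w x : V} (hw : w ∈ Subtype.val '' C.supp)
    (hx : x ∈ U) (h : G.Adj w x) : x ∈ Subtype.val '' C.supp := by
  obtain ⟨w, hwC, rfl⟩ := hw
  exact ⟨⟨x, hx⟩, (C.mem_supp_congr_adj (G := G.induce U) (by simpa using h)).mp hwC, rfl⟩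

variable [Fintype V]

noncomputable def distLevel (G : SimpleGraph V) (S : Set V) (v : V) (k : ℕ) : Finset V :=
  {x | x ∈ S ∧ G.dist v x = k}

variable {S U : Set V} {v : V}

@[simp]
theorem mem_distLevel {k : ℕ} {x : V} : x ∈ G.distLevel S v k ↔ x ∈ S ∧ G.dist v x = k := by
  simp [distLevel]

theorem coe_distLevel_subset (k : ℕ) : (G.distLevel S v k : Set V) ⊆ S :=
  fun _ hx => (mem_distLevel.mp hx).1

theorem card_adj_mem_le_card_adj_near_add (hS : ∀ w ∈ S, ∀ x ∈ U, G.Adj w x → x ∈ S)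
    {w : V} (hw : w ∈ S) :
    #{x | G.Adj w x ∧ x ∈ U} ≤
      #{x | G.Adj w x ∧ G.dist x v ≤ G.dist v w} +
        #{x ∈ G.distLevel S v (G.dist v w + 1) | G.Adj w x} := by
  refine (card_le_card fun x hx => ?_).trans (card_union_le _ _)
  simp only [mem_filter, mem_univ, true_and, mem_union, distLevel] at hx ⊢
  have := hx.1.dist_le_dist_add_one v
  rw [dist_comm (u := x)]
  by_cases hxw : G.dist v x ≤ G.dist v w
  · exact .inl ⟨hx.1, hxw⟩
  · exact .inr ⟨⟨hS w hw x hx.2 hx.1, by omega⟩, hx.1⟩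

theorem card_adj_distLevel_le_card_adj_near {k : ℕ} {x : V}
    (hx : x ∈ G.distLevel S v (k + 1)) :
    #{w ∈ G.distLevel S v k | G.Adj w x} ≤ #{w | G.Adj x w ∧ G.dist w v ≤ G.dist v x} := by
  refine card_le_card fun w hw => ?_
  simp only [mem_filter, mem_univ, true_and, distLevel] at hx hw ⊢
  rw [dist_comm (u := w), hw.1.2, hx.2]
  exact ⟨hw.2.symm, k.le_succ⟩

end SimpleGraph

open SimpleGraph

theorem PropP3.card_distLevel_mul_le {V : Type*} [Fintype V] {G : SimpleGraph V} {d : ℕ}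
    {ε ρ₂ : ℝ} (hP3 : PropP3 G d ε ρ₂) {S U : Set V} {v : V}
    (hS : ∀ w ∈ S, ∀ x ∈ U, G.Adj w x → x ∈ S) {k : ℕ} (hk : (k : ℝ) + 1 ≤ (d : ℝ) ^ ε)
    {δ : ℝ} (hδ : ∀ w ∈ G.distLevel S v k, δ ≤ #{x | G.Adj w x ∧ x ∈ U}) :
    #(G.distLevel S v k) * (δ - ρ₂ * k) ≤ #(G.distLevel S v (k + 1)) * (ρ₂ * (k + 1)) := by
  rw [← nsmul_eq_mul, ← nsmul_eq_mul]
  refine card_nsmul_le_card_nsmul G.Adj (fun w hw => ?_) fun x hx => ?_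
  · have hwk : G.dist v w = k := (mem_distLevel.mp hw).2
    have hnear := hP3 v w (by rw [hwk]; linarith)
    have hsplit := (Nat.cast_le (α := ℝ)).mpr
      (card_adj_mem_le_card_adj_near_add (v := v) hS (mem_distLevel.mp hw).1)
    rw [hwk] at hnear hsplit
    have := hδ w hw
    rw [bipartiteAbove]
    push_cast at hsplit
    linarith
  · have hxk : G.dist v x = k + 1 := (mem_distLevel.mp hx).2
    have hnear := hP3 v x (by rw [hxk]; push_cast; linarith)
    rw [hxk] at hnear
    push_cast at hnear
    exact (Nat.cast_le.mpr (card_adj_distLevel_le_card_adj_near hx)).trans (by rwa [hxk])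

theorem pow_le_of_mul_le_succ {R : Type*} [Semiring R] [PartialOrder R] [IsOrderedRing R]
    {f : ℕ → R} {r : R} (hr : 0 ≤ r) (h0 : 1 ≤ f 0) {K : ℕ}
    (hf : ∀ k < K, r * f k ≤ f (k + 1)) : r ^ K ≤ f K := by
  induction K with
  | zero => simpa using h0
  | succ K ih =>
    calc r ^ (K + 1) = r * r ^ K := pow_succ' r K
      _ ≤ r * f K := mul_le_mul_of_nonneg_left (ih fun k hk => hf k (by omega)) hr
      _ ≤ f (K + 1) := hf K K.lt_succ_self

theorem div_mul_le_sq_div_two_sub {A ρ : ℝ} {k : ℕ} (hρ : 0 < ρ) (hA : 4 * ρ ≤ A)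
    (hk : (k : ℝ) + 1 ≤ A / 2) : A / (4 * ρ) * (ρ * (k + 1)) ≤ A ^ 2 / 2 - ρ * k := by
  have hlhs : A / (4 * ρ) * (ρ * (k + 1)) = A * (k + 1) / 4 := by
    field_simp
  rw [hlhs]
  nlinarith

theorem PropP3.mul_card_distLevel_le {V : Type*} [Fintype V] {G : SimpleGraph V} {d : ℕ}
    {ε ρ₂ : ℝ} (hP3 : PropP3 G d ε ρ₂) (hρ₂ : 0 < ρ₂) (hd : 4 * ρ₂ ≤ (d : ℝ) ^ (ε / 2))
    {S U : Set V} {v : V} (hS : ∀ w ∈ S, ∀ x ∈ U, G.Adj w x → x ∈ S) {k : ℕ}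
    (hk : (k : ℝ) + 1 ≤ (d : ℝ) ^ (ε / 2) / 2)
    (hdeg : ∀ w ∈ G.distLevel S v k, (d : ℝ) ^ ε / 2 ≤ #{x | G.Adj w x ∧ x ∈ U}) :
    (d : ℝ) ^ (ε / 2) / (4 * ρ₂) * #(G.distLevel S v k) ≤ #(G.distLevel S v (k + 1)) := by
  set A := (d : ℝ) ^ (ε / 2) with hA
  have hA_sq : (d : ℝ) ^ ε = A ^ 2 := by
    rw [hA, ← Real.rpow_mul_natCast (Nat.cast_nonneg d)]
    norm_num
  rw [hA_sq] at hdeg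
  have hstep := hP3.card_distLevel_mul_le hS (by rw [hA_sq]; nlinarith) hdeg
  refine le_of_mul_le_mul_right ?_ (by positivity : 0 < ρ₂ * (k + 1))
  calc A / (4 * ρ₂) * #(G.distLevel S v k) * (ρ₂ * (k + 1))
      = #(G.distLevel S v k) * (A / (4 * ρ₂) * (ρ₂ * (k + 1))) := by ring
    _ ≤ #(G.distLevel S v k) * (A ^ 2 / 2 - ρ₂ * k) := by
      gcongr
      exact div_mul_le_sq_div_two_sub hρ₂ hd hk
    _ ≤ #(G.distLevel S v (k + 1)) * (ρ₂ * (k + 1)) := hstep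

variable {V : Type*} [Fintype V] [DecidableEq V]

theorem induced_component_lower_bound_general (G : SimpleGraph V) (d : ℕ) (ε ρ₂ : ℝ)
    (hρ₂ : 0 < ρ₂)
    (hP3 : PropP3 G d ε ρ₂)
    (hd : 4 * ρ₂ ≤ (d : ℝ) ^ (ε / 2))
    (U : Set V) (v : V) (hv : v ∈ U)
    (hU : ∀ w : V, G.dist v w ≤ Nat.floor ((d : ℝ) ^ (ε / 2)) →
      (d : ℝ) ^ ε / 2 ≤ (((univ : Finset V).filter fun x => G.Adj w x ∧ x ∈ U).card : ℝ)) :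
    ((d : ℝ) ^ (ε / 2) / (4 * ρ₂)) ^ (Nat.floor ((d : ℝ) ^ (ε / 2) / 2)) ≤
      ((((G.induce U).connectedComponentMk ⟨v, hv⟩).supp).ncard : ℝ) := by
  set A := (d : ℝ) ^ (ε / 2)
  set C := (G.induce U).connectedComponentMk ⟨v, hv⟩
  set S : Set V := Subtype.val '' C.supp
  have hS : ∀ w ∈ S, ∀ x ∈ U, G.Adj w x → x ∈ S := fun _ hw _ hx h =>
    ConnectedComponent.mem_image_val_supp_of_adj hw hx h
  have hL0 : (1 : ℝ) ≤ #(G.distLevel S v 0) := by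
    have hvL : v ∈ G.distLevel S v 0 :=
      mem_distLevel.mpr ⟨⟨⟨v, hv⟩, ConnectedComponent.connectedComponentMk_mem, rfl⟩, dist_self⟩
    exact_mod_cast card_pos.mpr ⟨v, hvL⟩
  have hgrow : ∀ k < ⌊A / 2⌋₊,
      A / (4 * ρ₂) * #(G.distLevel S v k) ≤ #(G.distLevel S v (k + 1)) := by
    intro k hk
    have hkA : ((k + 1 : ℕ) : ℝ) ≤ A / 2 :=
      (Nat.cast_le.mpr hk).trans (Nat.floor_le (by positivity))
    push_cast at hkA
    refine hP3.mul_card_distLevel_le hρ₂ hd hS hkA fun w hw => hU w ?_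
    exact (mem_distLevel.mp hw).2.trans_le (Nat.le_floor (by linarith))
  calc (A / (4 * ρ₂)) ^ ⌊A / 2⌋₊ ≤ #(G.distLevel S v ⌊A / 2⌋₊) :=
        pow_le_of_mul_le_succ (by positivity) hL0 hgrow
    _ ≤ S.ncard := by
        rw [← Set.ncard_coe_finset]
        exact_mod_cast Set.ncard_le_ncard (coe_distLevel_subset (G := G) (v := v) _)
    _ = C.supp.ncard := by rw [Set.ncard_image_of_injective _ Subtype.val_injective]

/-- **Lemma 9 (deterministic expansion)**: in a `d`-regular graph satisfying P3
with constant `ρ₂` (for some `ε ∈ (0,1)`) and with `d^(ε/2) ≥ 4ρ₂`, if `v ∈ U`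
and every vertex within distance `⌊d^(ε/2)⌋` of `v` has at least `d^ε/2`
neighbours in `U`, then the connected component of `v` in the subgraph induced
by `U` has at least `(d^(ε/2)/(4ρ₂))^⌊d^(ε/2)/2⌋` vertices. -/
theorem induced_component_lower_bound (G : SimpleGraph V) (d : ℕ) (ε ρ₂ : ℝ)
    (hε : 0 < ε ∧ ε < 1) (hρ₂ : 0 < ρ₂)
    (hreg : G.IsRegularOfDegree d)
    (hP3 : PropP3 G d ε ρ₂)
    (hd : 4 * ρ₂ ≤ (d : ℝ) ^ (ε / 2))
    (U : Set V) (v : V) (hv : v ∈ U)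
    (hU : ∀ w : V, G.dist v w ≤ Nat.floor ((d : ℝ) ^ (ε / 2)) →
      (d : ℝ) ^ ε / 2 ≤ (((univ : Finset V).filter fun x => G.Adj w x ∧ x ∈ U).card : ℝ)) :
    ((d : ℝ) ^ (ε / 2) / (4 * ρ₂)) ^ (Nat.floor ((d : ℝ) ^ (ε / 2) / 2)) ≤
      ((((G.induce U).connectedComponentMk ⟨v, hv⟩).supp).ncard : ℝ) :=
  induced_component_lower_bound_general G d ε ρ₂ hρ₂ hP3 hd U v hv hU
end
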